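/- arXiv:1104.0280 — 2 statements merged into one kernel-verified Lean document; each statement's English description precedes it below -/
import Mathlib

section
/- For all integers d₁, d₂, d₃, e₁, e₂, e₃, setting α₁ = d₁H₁+d₂H₂+d₃H₃, α₂ = d₂H₁+d₁H₂+d₃H₃ and β = e₁H₁+e₂H₂+e₃H₃, the coefficient of H₁²H₂²H₃ in [X]·(α₁·β·(α₁+β) − α₂·β·(α₂+β)) equals −4(d₁−d₂)(e₁−e₂)((d₁+d₂+d₃)+(e₁+e₂+e₃)). In particular, whenever (d₁−d₂)(e₁−e₂)((d₁+d₂+d₃)+(e₁+e₂+e₃)) ≠ 0, the rank-2 bundles L₁⊕L₃ and L₂⊕L₃ on X (where L₁ = O(d₁,d₂,d₃)|_X, L₂ = O(d₂,d₁,d₃)|_X, L₃ = O(e₁,e₂,e₃)|_X) have different Chern invariants ∫c₂(E)c₁(E), even though L₁ and L₂ are algebraically cobordant; hence direct sum is not compatible with algebraic cobordism of vector bundles. -/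
/-! Since `∫` is a coefficient, it vanishes on the monomial ideal `(H₁³, H₂³, H₃²)`: no
generator divides `H₁²H₂²H₃`. So `∫` factors through the Chow ring, where the cubic relations
collapse the class in question to `−4(d₁−d₂)(e₁−e₂)(Σdᵢ+Σeᵢ) · H₁²H₂²H₃`. -/

open MvPolynomial Finset

noncomputable section

/-- The three hyperplane classes `H₁, H₂, H₃` of `ℙ²×ℙ²×ℙ¹`,
as variables of the polynomial ring `ℤ[H₁,H₂,H₃]`. -/
def H1 : MvPolynomial (Fin 3) ℤ := X 0
def H2 : MvPolynomial (Fin 3) ℤ := X 1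
def H3 : MvPolynomial (Fin 3) ℤ := X 2

/-- `∫p` : the coefficient of `H₁²H₂²H₃` in `p`, i.e. the degree map of
`ℙ²×ℙ²×ℙ¹` normalized by `H₁·H₁·H₂·H₂·H₃ = 1`. -/
def intX (p : MvPolynomial (Fin 3) ℤ) : ℤ :=
  coeff (Finsupp.single 0 2 + Finsupp.single 1 2 + Finsupp.single 2 1) p

/-- `[X] = (2H₁+2H₂)(H₁+H₂+2H₃)`, the class of the complete-intersection
Calabi-Yau 3-fold `X ⊂ ℙ²×ℙ²×ℙ¹` cut out by a section of `O(2,2,0) ⊕ O(1,1,2)`. -/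
def Xcls : MvPolynomial (Fin 3) ℤ := (2 * H1 + 2 * H2) * (H1 + H2 + 2 * H3)

/-- The pushforward of `c₁(O(d₁,d₂,d₃)|_X)`, i.e. the linear form `d₁H₁+d₂H₂+d₃H₃`. -/
def L (d₁ d₂ d₃ : ℤ) : MvPolynomial (Fin 3) ℤ := C d₁ * H1 + C d₂ * H2 + C d₃ * H3

/-- `σ = (1+H₁)³(1+H₂)³(1+H₃)² · (Σ_{k<6} (−(2H₁+2H₂))^k) · (Σ_{k<6} (−(H₁+H₂+2H₃))^k)`,
the truncated total Chern class of `T_X` divided by `[X]` (adjunction formula with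
truncated geometric series for the inverses). -/
def sigmaX : MvPolynomial (Fin 3) ℤ :=
  (1 + H1) ^ 3 * (1 + H2) ^ 3 * (1 + H3) ^ 2 *
    (∑ k ∈ Finset.range 6, (-(2 * H1 + 2 * H2)) ^ k) *
    (∑ k ∈ Finset.range 6, (-(H1 + H2 + 2 * H3)) ^ k)

theorem MvPolynomial.coeff_eq_zero_of_mem_ideal_span_monomial {σ R : Type*} [CommSemiring R]
    {s : Set (σ →₀ ℕ)} {m : σ →₀ ℕ} (hm : ∀ si ∈ s, ¬si ≤ m) {p : MvPolynomial σ R}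
    (hp : p ∈ Ideal.span ((fun si => monomial si (1 : R)) '' s)) : coeff m p = 0 := by
  by_contra h
  obtain ⟨si, hsi, hle⟩ := mem_ideal_span_monomial_image.mp hp m (mem_support_iff.mpr h)
  exact hm si hsi hle

def chowIdeal : Ideal (MvPolynomial (Fin 3) ℤ) := Ideal.span {H1 ^ 3, H2 ^ 3, H3 ^ 2}

theorem intX_eq_zero_of_mem_chowIdeal {p : MvPolynomial (Fin 3) ℤ} (hp : p ∈ chowIdeal) :
    intX p = 0 := by
  have hgen : chowIdeal = Ideal.span ((fun si => monomial si (1 : ℤ)) ''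
      {Finsupp.single 0 3, Finsupp.single 1 3, Finsupp.single 2 2}) := by
    simp only [chowIdeal, H1, H2, H3, X_pow_eq_monomial, Set.image_insert_eq, Set.image_singleton]
  rw [hgen] at hp
  refine coeff_eq_zero_of_mem_ideal_span_monomial ?_ hp
  simp only [Set.mem_insert_iff, Set.mem_singleton_iff, forall_eq_or_imp, forall_eq,
    Finsupp.le_def, not_forall]
  exact ⟨⟨0, by simp⟩, ⟨1, by simp⟩, ⟨2, by simp⟩⟩

theorem intX_eq_of_mk_eq {p q : MvPolynomial (Fin 3) ℤ}
    (h : Ideal.Quotient.mk chowIdeal p = Ideal.Quotient.mk chowIdeal q) : intX p = intX q := by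
  have hpq := intX_eq_zero_of_mem_chowIdeal (Ideal.Quotient.eq.mp h)
  rwa [intX, coeff_sub, sub_eq_zero] at hpq

theorem intX_C_mul_point (n : ℤ) : intX (C n * (H1 ^ 2 * H2 ^ 2 * H3)) = n := by
  rw [intX, H1, H2, H3, X_pow_eq_monomial, X_pow_eq_monomial, X, monomial_mul, monomial_mul,
    C_mul_monomial, coeff_monomial, if_pos rfl, one_mul, one_mul, mul_one]

theorem mk_Xcls_mul_chernDifference (d₁ d₂ d₃ e₁ e₂ e₃ : ℤ) :
    Ideal.Quotient.mk chowIdeal (Xcls * (L d₁ d₂ d₃ * L e₁ e₂ e₃ * (L d₁ d₂ d₃ + L e₁ e₂ e₃) -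
        L d₂ d₁ d₃ * L e₁ e₂ e₃ * (L d₂ d₁ d₃ + L e₁ e₂ e₃))) =
      Ideal.Quotient.mk chowIdeal
        (C (-4 * (d₁ - d₂) * (e₁ - e₂) * ((d₁ + d₂ + d₃) + (e₁ + e₂ + e₃))) *
          (H1 ^ 2 * H2 ^ 2 * H3)) := by
  have hrel : ∀ p ∈ ({H1 ^ 3, H2 ^ 3, H3 ^ 2} : Set _), Ideal.Quotient.mk chowIdeal p = 0 :=
    fun p hp => Ideal.Quotient.eq_zero_iff_mem.mpr (Ideal.subset_span hp)
  have h₁ : Ideal.Quotient.mk chowIdeal H1 ^ 3 = 0 := by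
    rw [← map_pow]; exact hrel _ (by simp)
  have h₂ : Ideal.Quotient.mk chowIdeal H2 ^ 3 = 0 := by
    rw [← map_pow]; exact hrel _ (by simp)
  have h₃ : Ideal.Quotient.mk chowIdeal H3 ^ 2 = 0 := by
    rw [← map_pow]; exact hrel _ (by simp)
  simp only [Xcls, L, map_add, map_mul, map_sub, map_pow, map_ofNat, eq_intCast, map_intCast]
  grind

/-- Noncompatibility of direct sum with algebraic cobordism:
`∫c₂c₁(L₁⊕L₃) − ∫c₂c₁(L₂⊕L₃) = −4(d₁−d₂)(e₁−e₂)((d₁+d₂+d₃)+(e₁+e₂+e₃))` for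
`L₁ = O(d₁,d₂,d₃)|_X`, `L₂ = O(d₂,d₁,d₃)|_X`, `L₃ = O(e₁,e₂,e₃)|_X`; in particular the
two rank-2 bundles have different Chern invariants whenever the right side is nonzero. -/
theorem statement9 (d₁ d₂ d₃ e₁ e₂ e₃ : ℤ) :
    intX (Xcls * (L d₁ d₂ d₃ * L e₁ e₂ e₃ * (L d₁ d₂ d₃ + L e₁ e₂ e₃) -
        L d₂ d₁ d₃ * L e₁ e₂ e₃ * (L d₂ d₁ d₃ + L e₁ e₂ e₃))) =
      -4 * (d₁ - d₂) * (e₁ - e₂) * ((d₁ + d₂ + d₃) + (e₁ + e₂ + e₃)) ∧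
    ((d₁ - d₂) * (e₁ - e₂) * ((d₁ + d₂ + d₃) + (e₁ + e₂ + e₃)) ≠ 0 →
      intX (Xcls * (L d₁ d₂ d₃ * L e₁ e₂ e₃ * (L d₁ d₂ d₃ + L e₁ e₂ e₃))) ≠
      intX (Xcls * (L d₂ d₁ d₃ * L e₁ e₂ e₃ * (L d₂ d₁ d₃ + L e₁ e₂ e₃)))) := by
  have hdiff : intX (Xcls * (L d₁ d₂ d₃ * L e₁ e₂ e₃ * (L d₁ d₂ d₃ + L e₁ e₂ e₃) -
      L d₂ d₁ d₃ * L e₁ e₂ e₃ * (L d₂ d₁ d₃ + L e₁ e₂ e₃))) =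
      -4 * (d₁ - d₂) * (e₁ - e₂) * ((d₁ + d₂ + d₃) + (e₁ + e₂ + e₃)) := by
    rw [intX_eq_of_mk_eq (mk_Xcls_mul_chernDifference d₁ d₂ d₃ e₁ e₂ e₃), intX_C_mul_point]
  refine ⟨hdiff, fun hne heq => hne ?_⟩
  rw [mul_sub, intX, coeff_sub, ← intX, ← intX, heq, sub_self] at hdiff
  linarith

end
end

section
/- For all integers d₁, d₂, d₃, e₁, e₂, e₃, setting α₁ = d₁H₁+d₂H₂+d₃H₃, α₂ = d₂H₁+d₁H₂+d₃H₃ and β = e₁H₁+e₂H₂+e₃H₃, the coefficient of H₁²H₂²H₃ in [X]·((β−α₁)³ − (β−α₂)³) equals 12(d₁−d₂)(e₁−e₂)((e₁+e₂+e₃)−(d₁+d₂+d₃)). (This is the full simplification of the difference ∫_X c₁(Hom(L₁,L₃))³ − ∫_X c₁(Hom(L₂,L₃))³, where Hom(Lᵢ,L₃) = Lᵢ^∨⊗L₃ and L₁ = O(d₁,d₂,d₃)|_X, L₂ = O(d₂,d₁,d₃)|_X, L₃ = O(e₁,e₂,e₃)|_X.) In particular the difference is nonzero for general choices of the six integers,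 so Hom is not compatible with algebraic cobordism of vector bundles. -/
open MvPolynomial Finset

noncomputable section

/-!
Writing `a, b, c` for the coefficients of `β − α₁`, one finds
`∫ [X]·(aH₁ + bH₂ + cH₃)³ = 12ab(a + b + c) + 6c(a + b)²`.
Swapping `d₁` and `d₂` turns `(a, b, c)` into `(a', b', c)` with `a' + b' = a + b`, so only the
first term changes, and `ab − a'b' = (d₁ − d₂)(e₁ − e₂)`.
-/

theorem MvPolynomial.coeff_mul_C {σ R : Type*} [CommSemiring R] (m : σ →₀ ℕ)
    (p : MvPolynomial σ R) (a : R) : coeff m (p * C a) = coeff m p * a := by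
  rw [mul_comm, coeff_C_mul, mul_comm]

theorem MvPolynomial.coeff_mul_ofNat {σ R : Type*} [CommSemiring R] (m : σ →₀ ℕ)
    (p : MvPolynomial σ R) (n : ℕ) [n.AtLeastTwo] :
    coeff m (p * ofNat(n)) = coeff m p * ofNat(n) := by
  rw [← map_ofNat C, coeff_mul_C]

theorem intX_sub (p q : MvPolynomial (Fin 3) ℤ) : intX (p - q) = intX p - intX q :=
  coeff_sub _ _ _ _

theorem L_sub_L (d₁ d₂ d₃ e₁ e₂ e₃ : ℤ) :
    L e₁ e₂ e₃ - L d₁ d₂ d₃ = L (e₁ - d₁) (e₂ - d₂) (e₃ - d₃) := by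
  simp only [L, C_sub]
  ring

/- `[X] = 2(H₁² + 2H₁H₂ + H₂² + 2H₁H₃ + 2H₂H₃)`, so the contributions come from the
intersection numbers `∫_X H₁²H₂ = ∫_X H₁H₂² = ∫_X H₁H₂H₃ = 4` and `∫_X H₁²H₃ = ∫_X H₂²H₃ = 2`. -/
theorem intX_Xcls_mul_L_pow_three (a b c : ℤ) :
    intX (Xcls * L a b c ^ 3) = 12 * a * b * (a + b + c) + 6 * c * (a + b) ^ 2 := by
  simp only [intX, Xcls, L, H1, H2, H3]
  ring_nf
  simp only [coeff_add, coeff_mul_C, coeff_mul_ofNat, ← map_pow, X, monomial_pow, monomial_mul,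
    coeff_monomial]
  simp [Finsupp.ext_iff, Fin.forall_fin_succ]

/-- Noncompatibility of `Hom` with algebraic cobordism:
`∫c₁(Hom(L₁,L₃))³ − ∫c₁(Hom(L₂,L₃))³ = 12(d₁−d₂)(e₁−e₂)((e₁+e₂+e₃)−(d₁+d₂+d₃))`
where `Hom(Lᵢ,L₃) = Lᵢ^∨⊗L₃` has first Chern class `β−αᵢ`; in particular the
difference is nonzero for general choices of the six integers. -/
theorem statement11 (d₁ d₂ d₃ e₁ e₂ e₃ : ℤ) :
    intX (Xcls * ((L e₁ e₂ e₃ - L d₁ d₂ d₃) ^ 3 - (L e₁ e₂ e₃ - L d₂ d₁ d₃) ^ 3)) =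
      12 * (d₁ - d₂) * (e₁ - e₂) * ((e₁ + e₂ + e₃) - (d₁ + d₂ + d₃)) ∧
    ((d₁ - d₂) * (e₁ - e₂) * ((e₁ + e₂ + e₃) - (d₁ + d₂ + d₃)) ≠ 0 →
      intX (Xcls * (L e₁ e₂ e₃ - L d₁ d₂ d₃) ^ 3) ≠
      intX (Xcls * (L e₁ e₂ e₃ - L d₂ d₁ d₃) ^ 3)) := by
  have hdiff : intX (Xcls * (L e₁ e₂ e₃ - L d₁ d₂ d₃) ^ 3) -
      intX (Xcls * (L e₁ e₂ e₃ - L d₂ d₁ d₃) ^ 3) =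
        12 * (d₁ - d₂) * (e₁ - e₂) * ((e₁ + e₂ + e₃) - (d₁ + d₂ + d₃)) := by
    rw [L_sub_L, L_sub_L, intX_Xcls_mul_L_pow_three, intX_Xcls_mul_L_pow_three]
    ring
  refine ⟨by rw [mul_sub, intX_sub, hdiff], fun hne heq => hne ?_⟩
  rw [heq, sub_self] at hdiff
  simpa using hdiff.symm

end
end
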